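/- arXiv:1810.05311 — 5 statements merged into one kernel-verified Lean document; each statement's English description precedes it below -/
import Mathlib

section
/- Let H be a real inner product space and M a nonnegative symmetric operator on H. Given sequences φⁿ, qⁿ ∈ H, γ₁, γ₂ ≥ 0, a symmetric nonnegative operator −Δ (the negative Laplacian) with (−Δφ, ψ) = (∇φ, ∇ψ), define μ̂ = −2γ₁ Δ φ^{n+1/2} + 2γ₂ φ^{n+1/2} + 2 q^{n+1/2} q̄' where φ^{n+1/2} = (φⁿ⁺¹+φⁿ)/2, q^{n+1/2} = (qⁿ⁺¹+qⁿ)/2, and q̄' ∈ H is arbitrary. If φⁿ⁺¹ − φⁿ = −Δt M μ̂ and qⁿ⁺¹ − qⁿ = q̄' ⊙ (φⁿ⁺¹ − φⁿ) pointwise (so that (qⁿ⁺¹−qⁿ, qⁿ⁺¹+qⁿ) = (q̄'(φⁿ⁺¹−φⁿ), qⁿ⁺¹+qⁿ)), then with Fⁿ := γ₁‖∇φⁿ‖² + γ₂‖φⁿ‖² + ‖qⁿ‖² one has Fⁿ⁺¹ − Fⁿ = −Δt (μ̂, M μ̂) ≤ 0. -/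
open RealInnerProductSpace

/-- Discrete energy dissipation law for the Crank–Nicolson EQ scheme for the
Allen–Cahn equation. `G` is the gradient operator, `Lap` the Laplacian with
`⟪-Lap φ, ψ⟫ = ⟪G φ, G ψ⟫`, and `Q` the (symmetric) multiplication by the
extrapolated `q̄'`. -/
theorem eq_scheme_allen_cahn_energy_dissipation
    {H H₂ : Type*} [NormedAddCommGroup H] [InnerProductSpace ℝ H]
    [NormedAddCommGroup H₂] [InnerProductSpace ℝ H₂]
    (M : H →ₗ[ℝ] H) (hMsymm : ∀ x y : H, ⟪M x, y⟫ = ⟪x, M y⟫)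
    (hMnonneg : ∀ x : H, 0 ≤ ⟪M x, x⟫)
    (G : H →ₗ[ℝ] H₂) (Lap : H →ₗ[ℝ] H)
    (hLap : ∀ x y : H, ⟪-Lap x, y⟫ = ⟪G x, G y⟫)
    (γ₁ γ₂ : ℝ) (hγ₁ : 0 ≤ γ₁) (hγ₂ : 0 ≤ γ₂)
    (Q : H →ₗ[ℝ] H) (hQsymm : ∀ x y : H, ⟪Q x, y⟫ = ⟪x, Q y⟫)
    (φn φn1 qn qn1 μhat : H) (Δt : ℝ) (hΔt : 0 ≤ Δt)
    (hμ : μhat = (-(2 * γ₁)) • Lap (((1:ℝ)/2) • (φn1 + φn))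
        + (2 * γ₂) • (((1:ℝ)/2) • (φn1 + φn))
        + (2:ℝ) • Q (((1:ℝ)/2) • (qn1 + qn)))
    (hφ : φn1 - φn = -Δt • M μhat)
    (hq : qn1 - qn = Q (φn1 - φn)) :
    (γ₁ * ‖G φn1‖ ^ 2 + γ₂ * ‖φn1‖ ^ 2 + ‖qn1‖ ^ 2)
      - (γ₁ * ‖G φn‖ ^ 2 + γ₂ * ‖φn‖ ^ 2 + ‖qn‖ ^ 2)
      = -Δt * ⟪μhat, M μhat⟫
    ∧ -Δt * ⟪μhat, M μhat⟫ ≤ 0 := by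

  have key : ∀ a b : H, ⟪a + b, a - b⟫ = ‖a‖ ^ 2 - ‖b‖ ^ 2 := by
    intro a b
    simp only [inner_add_left, inner_sub_right, real_inner_self_eq_norm_sq,
      real_inner_comm a b]
    ring
  have key2 : ∀ a b : H₂, ⟪a + b, a - b⟫ = ‖a‖ ^ 2 - ‖b‖ ^ 2 := by
    intro a b
    simp only [inner_add_left, inner_sub_right, real_inner_self_eq_norm_sq,
      real_inner_comm a b]
    ring
  have hμ' : μhat = γ₁ • (-Lap (φn1 + φn)) + γ₂ • (φn1 + φn) + Q (qn1 + qn) := by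
    rw [hμ]
    simp only [map_smul, smul_smul, smul_neg]
    module
  have h1 : γ₁ * ‖G φn1‖ ^ 2 - γ₁ * ‖G φn‖ ^ 2 = γ₁ * ⟪-Lap (φn1 + φn), φn1 - φn⟫ := by
    rw [hLap, map_add, map_sub, key2]; ring
  have h2 : γ₂ * ‖φn1‖ ^ 2 - γ₂ * ‖φn‖ ^ 2 = γ₂ * ⟪φn1 + φn, φn1 - φn⟫ := by
    rw [key]; ring
  have h3 : ‖qn1‖ ^ 2 - ‖qn‖ ^ 2 = ⟪Q (qn1 + qn), φn1 - φn⟫ := by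
    rw [← key, hq, ← hQsymm]
  have hsum : (γ₁ * ‖G φn1‖ ^ 2 + γ₂ * ‖φn1‖ ^ 2 + ‖qn1‖ ^ 2)
      - (γ₁ * ‖G φn‖ ^ 2 + γ₂ * ‖φn‖ ^ 2 + ‖qn‖ ^ 2)
      = ⟪μhat, φn1 - φn⟫ := by
    rw [hμ', inner_add_left, inner_add_left, real_inner_smul_left,
      real_inner_smul_left]
    linarith
  have hmain : (γ₁ * ‖G φn1‖ ^ 2 + γ₂ * ‖φn1‖ ^ 2 + ‖qn1‖ ^ 2)
      - (γ₁ * ‖G φn‖ ^ 2 + γ₂ * ‖φn‖ ^ 2 + ‖qn‖ ^ 2)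
      = -Δt * ⟪μhat, M μhat⟫ := by
    rw [hsum, hφ, real_inner_smul_right]
  refine ⟨hmain, ?_⟩
  have hpos : 0 ≤ ⟪μhat, M μhat⟫ := by
    have := hMnonneg μhat
    rwa [real_inner_comm] at this
  nlinarith
end

section
/- Let H be a real Hilbert space, M ≥ 0 a symmetric operator, −Δ symmetric nonnegative, γ₁, γ₂ ≥ 0, g ∈ H, and rⁿ, rⁿ⁺¹ ∈ ℝ. Define μ̂ = −2γ₁Δφ^{n+1/2} + 2γ₂φ^{n+1/2} + r^{n+1/2} g with φ^{n+1/2} = (φⁿ⁺¹+φⁿ)/2, r^{n+1/2} = (rⁿ⁺¹+rⁿ)/2. If φⁿ⁺¹ − φⁿ = −Δt M μ̂ and rⁿ⁺¹ − rⁿ = (g/2, φⁿ⁺¹ − φⁿ), then with Fⁿ := γ₁‖∇φⁿ‖² + γ₂‖φⁿ‖² + (rⁿ)² one has Fⁿ⁺¹ − Fⁿ = −Δt (μ̂, M μ̂) ≤ 0. -/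
open RealInnerProductSpace

/-- Discrete energy dissipation law for the second-order SAV scheme for the
Allen–Cahn equation. -/
theorem sav_scheme_allen_cahn_energy_dissipation
    {H H₂ : Type*} [NormedAddCommGroup H] [InnerProductSpace ℝ H]
    [NormedAddCommGroup H₂] [InnerProductSpace ℝ H₂] [CompleteSpace H]
    (M : H →ₗ[ℝ] H) (hMsymm : ∀ x y : H, ⟪M x, y⟫ = ⟪x, M y⟫)
    (hMnonneg : ∀ x : H, 0 ≤ ⟪M x, x⟫)
    (G : H →ₗ[ℝ] H₂) (Lap : H →ₗ[ℝ] H)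
    (hLap : ∀ x y : H, ⟪-Lap x, y⟫ = ⟪G x, G y⟫)
    (γ₁ γ₂ : ℝ) (hγ₁ : 0 ≤ γ₁) (hγ₂ : 0 ≤ γ₂)
    (g : H) (rn rn1 : ℝ)
    (φn φn1 μhat : H) (Δt : ℝ) (hΔt : 0 ≤ Δt)
    (hμ : μhat = (-(2 * γ₁)) • Lap (((1:ℝ)/2) • (φn1 + φn))
        + (2 * γ₂) • (((1:ℝ)/2) • (φn1 + φn))
        + ((rn1 + rn) / 2) • g)
    (hφ : φn1 - φn = -Δt • M μhat)
    (hr : rn1 - rn = ⟪((1:ℝ)/2) • g, φn1 - φn⟫) :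
    (γ₁ * ‖G φn1‖ ^ 2 + γ₂ * ‖φn1‖ ^ 2 + rn1 ^ 2)
      - (γ₁ * ‖G φn‖ ^ 2 + γ₂ * ‖φn‖ ^ 2 + rn ^ 2)
      = -Δt * ⟪μhat, M μhat⟫
    ∧ -Δt * ⟪μhat, M μhat⟫ ≤ 0 := by
  have h1 : ⟪G (φn1 + φn), G (φn1 - φn)⟫ = ‖G φn1‖ ^ 2 - ‖G φn‖ ^ 2 := by
    rw [map_add, map_sub, inner_add_left, inner_sub_right, inner_sub_right,
      real_inner_self_eq_norm_sq, real_inner_self_eq_norm_sq,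
      real_inner_comm (G φn) (G φn1)]
    ring
  have h2 : ⟪φn1 + φn, φn1 - φn⟫ = ‖φn1‖ ^ 2 - ‖φn‖ ^ 2 := by
    rw [inner_add_left, inner_sub_right, inner_sub_right,
      real_inner_self_eq_norm_sq, real_inner_self_eq_norm_sq,
      real_inner_comm φn φn1]
    ring
  have h3 : ⟪-Lap (φn1 + φn), φn1 - φn⟫ = ‖G φn1‖ ^ 2 - ‖G φn‖ ^ 2 := by
    rw [hLap, h1]
  have hr' : rn1 ^ 2 - rn ^ 2 = ((rn1 + rn) / 2) * ⟪g, φn1 - φn⟫ := by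
    have h := hr
    rw [real_inner_smul_left] at h
    have hsq : rn1 ^ 2 - rn ^ 2 = (rn1 + rn) * (rn1 - rn) := by ring
    rw [hsq, h]; ring
  have hkey : ⟪μhat, φn1 - φn⟫ =
      γ₁ * (‖G φn1‖ ^ 2 - ‖G φn‖ ^ 2) + γ₂ * (‖φn1‖ ^ 2 - ‖φn‖ ^ 2)
        + (rn1 ^ 2 - rn ^ 2) := by
    rw [hμ]
    simp only [map_smul, inner_add_left, real_inner_smul_left]
    have hneg : ⟪Lap (φn1 + φn), φn1 - φn⟫ = -(‖G φn1‖ ^ 2 - ‖G φn‖ ^ 2) := by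
      have := h3
      rw [inner_neg_left] at this
      linarith
    have h2' : ⟪φn1, φn1 - φn⟫ + ⟪φn, φn1 - φn⟫ = ‖φn1‖ ^ 2 - ‖φn‖ ^ 2 := by
      rw [← inner_add_left]; exact h2
    rw [hneg, h2', hr']
    ring
  have hfin : ⟪μhat, φn1 - φn⟫ = -Δt * ⟪μhat, M μhat⟫ := by
    rw [hφ, real_inner_smul_right]
  constructor
  · rw [← hfin, hkey]; ring
  · have h4 : 0 ≤ ⟪μhat, M μhat⟫ := by
      rw [real_inner_comm]; exact hMnonneg μhat
    exact mul_nonpos_of_nonpos_of_nonneg (by linarith) h4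
end

section
/- Let H be a real Hilbert space, M ≥ 0 symmetric, −Δ symmetric nonnegative, γ₁, γ₂ ≥ 0, g, h' ∈ H with (h', M h') > 0, rⁿ, rⁿ⁺¹ ∈ ℝ. Set μ̂ = −2γ₁Δφ^{n+1/2} + 2γ₂φ^{n+1/2} + r^{n+1/2} g, L = (h', M μ̂)/(h', M h'), and μ̃ = μ̂ − L h'. If φⁿ⁺¹ − φⁿ = −Δt M μ̃ and rⁿ⁺¹ − rⁿ = (g/2, φⁿ⁺¹ − φⁿ), then Fⁿ⁺¹ − Fⁿ = −Δt (μ̃, M μ̃) ≤ 0, where Fⁿ := γ₁‖∇φⁿ‖² + γ₂‖φⁿ‖² + (rⁿ)². -/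
/-!
Testing the scheme against `φⁿ⁺¹ - φⁿ` gives the energy variation: the midpoint
(Crank–Nicolson) treatment of the quadratic terms and of `r` turns each pairing into a
difference of squares, so `(μ̂, φⁿ⁺¹ - φⁿ) = Fⁿ⁺¹ - Fⁿ`. The multiplier `L` is chosen so
that `(h', M μ̃) = 0`; hence `(μ̂, φⁿ⁺¹ - φⁿ) = (μ̃ + L h', -Δt M μ̃) = -Δt (μ̃, M μ̃)`,
which is nonpositive because `M` is nonnegative.
-/

open RealInnerProductSpace

section InnerProduct

variable {E F : Type*} [NormedAddCommGroup E] [InnerProductSpace ℝ E]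
  [NormedAddCommGroup F] [InnerProductSpace ℝ F]

theorem real_inner_add_sub_eq_norm_sq_sub_norm_sq (x y : E) :
    ⟪x + y, x - y⟫ = ‖x‖ ^ 2 - ‖y‖ ^ 2 := by
  rw [inner_add_left, inner_sub_right, inner_sub_right, real_inner_self_eq_norm_sq,
    real_inner_self_eq_norm_sq, real_inner_comm y x]
  ring

theorem real_inner_midpoint_sub (x y : E) :
    ⟪((1 : ℝ) / 2) • (x + y), x - y⟫ = (‖x‖ ^ 2 - ‖y‖ ^ 2) / 2 := by
  rw [real_inner_smul_left, real_inner_add_sub_eq_norm_sq_sub_norm_sq]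
  ring

theorem real_inner_map_midpoint_sub_of_neg_eq_gram {Lap : E →ₗ[ℝ] E} {G : E →ₗ[ℝ] F}
    (hLap : ∀ x y : E, ⟪-Lap x, y⟫ = ⟪G x, G y⟫) (x y : E) :
    ⟪Lap (((1 : ℝ) / 2) • (x + y)), x - y⟫ = -((‖G x‖ ^ 2 - ‖G y‖ ^ 2) / 2) := by
  have hGram := hLap (((1 : ℝ) / 2) • (x + y)) (x - y)
  rw [inner_neg_left, G.map_smul, G.map_add, G.map_sub, real_inner_midpoint_sub] at hGram
  linarith

theorem real_inner_map_sub_div_smul_eq_zero (M : E →ₗ[ℝ] E) {h : E} (hh : ⟪h, M h⟫ ≠ 0)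
    (μ : E) : ⟪h, M (μ - (⟪h, M μ⟫ / ⟪h, M h⟫) • h)⟫ = 0 := by
  rw [map_sub, map_smul, inner_sub_right, real_inner_smul_right, div_mul_cancel₀ _ hh,
    sub_self]

theorem real_inner_add_smul_smul_map_of_inner_map_eq_zero (M : E →ₗ[ℝ] E) {h ν : E}
    (hν : ⟪h, M ν⟫ = 0) (L c : ℝ) : ⟪ν + L • h, c • M ν⟫ = c * ⟪ν, M ν⟫ := by
  rw [inner_add_left, real_inner_smul_left, real_inner_smul_right, real_inner_smul_right, hν]
  ring

/-- The energy `Fⁿ` of the scheme, with `G` in the role of `∇`. -/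
def savEnergy (G : E →ₗ[ℝ] F) (γ₁ γ₂ : ℝ) (φ : E) (r : ℝ) : ℝ :=
  γ₁ * ‖G φ‖ ^ 2 + γ₂ * ‖φ‖ ^ 2 + r ^ 2

theorem savEnergy_sub_savEnergy {Lap : E →ₗ[ℝ] E} {G : E →ₗ[ℝ] F}
    (hLap : ∀ x y : E, ⟪-Lap x, y⟫ = ⟪G x, G y⟫) (γ₁ γ₂ : ℝ) (g : E) {φn φn1 : E}
    {rn rn1 : ℝ} (hr : rn1 - rn = ⟪((1 : ℝ) / 2) • g, φn1 - φn⟫) :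
    savEnergy G γ₁ γ₂ φn1 rn1 - savEnergy G γ₁ γ₂ φn rn
      = ⟪(-(2 * γ₁)) • Lap (((1 : ℝ) / 2) • (φn1 + φn))
          + (2 * γ₂) • (((1 : ℝ) / 2) • (φn1 + φn)) + ((rn1 + rn) / 2) • g, φn1 - φn⟫ := by
  rw [real_inner_smul_left] at hr
  rw [inner_add_left, inner_add_left, real_inner_smul_left _ _ (-(2 * γ₁)),
    real_inner_smul_left _ _ (2 * γ₂), real_inner_smul_left _ _ ((rn1 + rn) / 2),
    real_inner_map_midpoint_sub_of_neg_eq_gram hLap,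
    real_inner_midpoint_sub, savEnergy, savEnergy]
  have hsq : rn1 ^ 2 - rn ^ 2 = (rn1 + rn) * (rn1 - rn) := by ring
  linear_combination hsq + (rn1 + rn) * hr

end InnerProduct

theorem sav_lagrange_allen_cahn_energy_dissipation_general
    {H H₂ : Type*} [NormedAddCommGroup H] [InnerProductSpace ℝ H]
    [NormedAddCommGroup H₂] [InnerProductSpace ℝ H₂]
    (M : H →ₗ[ℝ] H)
    (hMnonneg : ∀ x : H, 0 ≤ ⟪M x, x⟫)
    (G : H →ₗ[ℝ] H₂) (Lap : H →ₗ[ℝ] H)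
    (hLap : ∀ x y : H, ⟪-Lap x, y⟫ = ⟪G x, G y⟫)
    (γ₁ γ₂ : ℝ)
    (g h' : H) (hh' : 0 < ⟪h', M h'⟫)
    (rn rn1 : ℝ) (φn φn1 μhat μtilde : H) (L : ℝ)
    (Δt : ℝ) (hΔt : 0 ≤ Δt)
    (hμ : μhat = (-(2 * γ₁)) • Lap (((1:ℝ)/2) • (φn1 + φn))
        + (2 * γ₂) • (((1:ℝ)/2) • (φn1 + φn))
        + ((rn1 + rn) / 2) • g)
    (hL : L = ⟪h', M μhat⟫ / ⟪h', M h'⟫)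
    (hμt : μtilde = μhat - L • h')
    (hφ : φn1 - φn = -Δt • M μtilde)
    (hr : rn1 - rn = ⟪((1:ℝ)/2) • g, φn1 - φn⟫) :
    (γ₁ * ‖G φn1‖ ^ 2 + γ₂ * ‖φn1‖ ^ 2 + rn1 ^ 2)
      - (γ₁ * ‖G φn‖ ^ 2 + γ₂ * ‖φn‖ ^ 2 + rn ^ 2)
      = -Δt * ⟪μtilde, M μtilde⟫
    ∧ -Δt * ⟪μtilde, M μtilde⟫ ≤ 0 := by
  have hOrth : ⟪h', M μtilde⟫ = 0 := by
    rw [hμt, hL]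
    exact real_inner_map_sub_div_smul_eq_zero M hh'.ne' μhat
  have hTest : ⟪μhat, φn1 - φn⟫ = -Δt * ⟪μtilde, M μtilde⟫ := by
    rw [hφ, show μhat = μtilde + L • h' by rw [hμt, sub_add_cancel]]
    exact real_inner_add_smul_smul_map_of_inner_map_eq_zero M hOrth L (-Δt)
  refine ⟨?_, mul_nonpos_of_nonpos_of_nonneg (neg_nonpos.2 hΔt) ?_⟩
  · rw [← hTest, hμ]
    exact savEnergy_sub_savEnergy hLap γ₁ γ₂ g hr
  · rw [real_inner_comm]
    exact hMnonneg μtilde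

/-- Energy dissipation of the SAV scheme for the Allen–Cahn equation with a
Lagrange multiplier enforcing volume conservation. -/
theorem sav_lagrange_allen_cahn_energy_dissipation
    {H H₂ : Type*} [NormedAddCommGroup H] [InnerProductSpace ℝ H]
    [NormedAddCommGroup H₂] [InnerProductSpace ℝ H₂] [CompleteSpace H]
    (M : H →ₗ[ℝ] H) (hMsymm : ∀ x y : H, ⟪M x, y⟫ = ⟪x, M y⟫)
    (hMnonneg : ∀ x : H, 0 ≤ ⟪M x, x⟫)
    (G : H →ₗ[ℝ] H₂) (Lap : H →ₗ[ℝ] H)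
    (hLap : ∀ x y : H, ⟪-Lap x, y⟫ = ⟪G x, G y⟫)
    (γ₁ γ₂ : ℝ) (hγ₁ : 0 ≤ γ₁) (hγ₂ : 0 ≤ γ₂)
    (g h' : H) (hh' : 0 < ⟪h', M h'⟫)
    (rn rn1 : ℝ) (φn φn1 μhat μtilde : H) (L : ℝ)
    (Δt : ℝ) (hΔt : 0 ≤ Δt)
    (hμ : μhat = (-(2 * γ₁)) • Lap (((1:ℝ)/2) • (φn1 + φn))
        + (2 * γ₂) • (((1:ℝ)/2) • (φn1 + φn))
        + ((rn1 + rn) / 2) • g)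
    (hL : L = ⟪h', M μhat⟫ / ⟪h', M h'⟫)
    (hμt : μtilde = μhat - L • h')
    (hφ : φn1 - φn = -Δt • M μtilde)
    (hr : rn1 - rn = ⟪((1:ℝ)/2) • g, φn1 - φn⟫) :
    (γ₁ * ‖G φn1‖ ^ 2 + γ₂ * ‖φn1‖ ^ 2 + rn1 ^ 2)
      - (γ₁ * ‖G φn‖ ^ 2 + γ₂ * ‖φn‖ ^ 2 + rn ^ 2)
      = -Δt * ⟪μtilde, M μtilde⟫
    ∧ -Δt * ⟪μtilde, M μtilde⟫ ≤ 0 :=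
  sav_lagrange_allen_cahn_energy_dissipation_general M hMnonneg G Lap hLap γ₁ γ₂ g h' hh' rn rn1 φn
    φn1 μhat μtilde L Δt hΔt hμ hL hμt hφ hr
end

section
/- Let H be a real Hilbert space, M ≥ 0 symmetric, −Δ symmetric nonnegative, γ₁, γ₂ ≥ 0, η > 0, q̄' a symmetric multiplication operator, qⁿ ∈ H, ζⁿ ∈ ℝ. Define μ̃^{n+1/2} = −2γ₁Δφ^{n+1/2} + 2γ₂φ^{n+1/2} + 2q^{n+1/2} q̄' + √η ζ^{n+1/2} (the scalar ζ^{n+1/2} times the constant function 1). Suppose φⁿ⁺¹−φⁿ = −Δt M μ̃^{n+1/2}, qⁿ⁺¹−qⁿ = q̄'(φⁿ⁺¹−φⁿ), and ζⁿ⁺¹−ζⁿ = √η (1, φⁿ⁺¹−φⁿ). Then with Fⁿ := γ₁‖∇φⁿ‖² + γ₂‖φⁿ‖² + ‖qⁿ‖² + (ζⁿ)²/2, one has Fⁿ⁺¹ − Fⁿ = −Δt (μ̃^{n+1/2}, M μ̃^{n+1/2}) ≤ 0. -/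
open RealInnerProductSpace

lemma pol_aux {E : Type*} [NormedAddCommGroup E] [InnerProductSpace ℝ E]
    (a b : E) : ⟪a + b, a - b⟫ = ‖a‖ ^ 2 - ‖b‖ ^ 2 := by
  rw [inner_add_left, inner_sub_right, inner_sub_right,
    real_inner_self_eq_norm_sq, real_inner_self_eq_norm_sq, real_inner_comm a b]
  ring

/-- Theorem 4.3: discrete energy dissipation law for the Crank–Nicolson EQ
scheme for the Allen–Cahn model with a penalizing potential. `one` denotes the
constant function 1. -/
theorem eq_scheme_penalized_allen_cahn_energy_dissipation
    {H H₂ : Type*} [NormedAddCommGroup H] [InnerProductSpace ℝ H]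
    [NormedAddCommGroup H₂] [InnerProductSpace ℝ H₂]
    (M : H →ₗ[ℝ] H) (hMsymm : ∀ x y : H, ⟪M x, y⟫ = ⟪x, M y⟫)
    (hMnonneg : ∀ x : H, 0 ≤ ⟪M x, x⟫)
    (G : H →ₗ[ℝ] H₂) (Lap : H →ₗ[ℝ] H)
    (hLap : ∀ x y : H, ⟪-Lap x, y⟫ = ⟪G x, G y⟫)
    (γ₁ γ₂ η : ℝ) (hγ₁ : 0 ≤ γ₁) (hγ₂ : 0 ≤ γ₂) (hη : 0 < η)
    (Q : H →ₗ[ℝ] H) (hQsymm : ∀ x y : H, ⟪Q x, y⟫ = ⟪x, Q y⟫)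
    (one : H) (φn φn1 qn qn1 μtilde : H) (ζn ζn1 : ℝ)
    (Δt : ℝ) (hΔt : 0 ≤ Δt)
    (hμ : μtilde = (-(2 * γ₁)) • Lap (((1:ℝ)/2) • (φn1 + φn))
        + (2 * γ₂) • (((1:ℝ)/2) • (φn1 + φn))
        + (2:ℝ) • Q (((1:ℝ)/2) • (qn1 + qn))
        + (Real.sqrt η * ((ζn1 + ζn) / 2)) • one)
    (hφ : φn1 - φn = -Δt • M μtilde)
    (hq : qn1 - qn = Q (φn1 - φn))
    (hζ : ζn1 - ζn = Real.sqrt η * ⟪one, φn1 - φn⟫) :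
    (γ₁ * ‖G φn1‖ ^ 2 + γ₂ * ‖φn1‖ ^ 2 + ‖qn1‖ ^ 2 + ζn1 ^ 2 / 2)
      - (γ₁ * ‖G φn‖ ^ 2 + γ₂ * ‖φn‖ ^ 2 + ‖qn‖ ^ 2 + ζn ^ 2 / 2)
      = -Δt * ⟪μtilde, M μtilde⟫
    ∧ -Δt * ⟪μtilde, M μtilde⟫ ≤ 0 := by
  have t1 : ⟪Lap (((1:ℝ)/2) • (φn1 + φn)), φn1 - φn⟫
      = -((1/2) * (‖G φn1‖ ^ 2 - ‖G φn‖ ^ 2)) := by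
    have h := hLap (((1:ℝ)/2) • (φn1 + φn)) (φn1 - φn)
    rw [inner_neg_left] at h
    have h2 : ⟪G (((1:ℝ)/2) • (φn1 + φn)), G (φn1 - φn)⟫
        = (1/2) * (‖G φn1‖ ^ 2 - ‖G φn‖ ^ 2) := by
      rw [map_smul, real_inner_smul_left, map_add, map_sub, pol_aux]
    rw [h2] at h
    linarith
  have t2 : ⟪φn1 + φn, φn1 - φn⟫ = ‖φn1‖ ^ 2 - ‖φn‖ ^ 2 := pol_aux _ _
  have t3 : ⟪Q (((1:ℝ)/2) • (qn1 + qn)), φn1 - φn⟫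
      = (1/2) * (‖qn1‖ ^ 2 - ‖qn‖ ^ 2) := by
    rw [hQsymm, ← hq, real_inner_smul_left, pol_aux]
  have t4 : Real.sqrt η * ⟪one, φn1 - φn⟫ = ζn1 - ζn := hζ.symm
  have key : ⟪μtilde, φn1 - φn⟫
      = (γ₁ * ‖G φn1‖ ^ 2 + γ₂ * ‖φn1‖ ^ 2 + ‖qn1‖ ^ 2 + ζn1 ^ 2 / 2)
        - (γ₁ * ‖G φn‖ ^ 2 + γ₂ * ‖φn‖ ^ 2 + ‖qn‖ ^ 2 + ζn ^ 2 / 2) := by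
    rw [hμ]
    simp only [inner_add_left, real_inner_smul_left]
    have t2' : ⟪φn1 + φn, φn1 - φn⟫
        = ⟪φn1, φn1 - φn⟫ + ⟪φn, φn1 - φn⟫ := inner_add_left _ _ _
    linear_combination (-(2 * γ₁)) * t1 + γ₂ * t2 - γ₂ * t2' + 2 * t3
      + ((ζn1 + ζn) / 2) * t4
  have keyM : ⟪μtilde, φn1 - φn⟫ = -Δt * ⟪μtilde, M μtilde⟫ := by
    rw [hφ, real_inner_smul_right]
  constructor
  · rw [← keyM, key]
  · have h1 : 0 ≤ ⟪μtilde, M μtilde⟫ := by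
      rw [real_inner_comm]; exact hMnonneg μtilde
    have := mul_nonneg hΔt h1
    linarith
end

section
/- Let H be a real inner product space and M ≥ 0 a symmetric operator. Suppose φⁿ⁺¹ − φⁿ = Δt·D μ̂ where D is a symmetric operator satisfying (Dψ, ψ) = −(∇ψ, M∇ψ) ≤ 0 for all ψ (the discrete operator ∇·(M∇·)). With μ̂ = −2γ₁Δφ^{n+1/2} + 2γ₂φ^{n+1/2} + 2q^{n+1/2}q̄' and qⁿ⁺¹ − qⁿ = q̄'(φⁿ⁺¹−φⁿ), the discrete energy Fⁿ := γ₁‖∇φⁿ‖² + γ₂‖φⁿ‖² + ‖qⁿ‖² satisfies Fⁿ⁺¹ − Fⁿ = −Δt(∇μ̂, M∇μ̂) ≤ 0. -/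
open RealInnerProductSpace

lemma inner_add_sub_self_real {H : Type*} [NormedAddCommGroup H] [InnerProductSpace ℝ H]
    (a b : H) : ⟪a + b, a - b⟫ = ‖a‖ ^ 2 - ‖b‖ ^ 2 := by
  rw [inner_add_left, inner_sub_right, inner_sub_right, real_inner_comm b a,
    real_inner_self_eq_norm_sq, real_inner_self_eq_norm_sq]
  ring

/-- Energy dissipation law for the EQ Crank–Nicolson scheme for the
Cahn–Hilliard equation: `D = ∇·(M∇)` satisfies `⟪Dψ, ψ⟫ = −⟪∇ψ, M∇ψ⟫`. -/
theorem eq_scheme_cahn_hilliard_energy_dissipation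
    {H H₂ : Type*} [NormedAddCommGroup H] [InnerProductSpace ℝ H]
    [NormedAddCommGroup H₂] [InnerProductSpace ℝ H₂]
    (M : H₂ →ₗ[ℝ] H₂) (hMsymm : ∀ x y : H₂, ⟪M x, y⟫ = ⟪x, M y⟫)
    (hMnonneg : ∀ x : H₂, 0 ≤ ⟪M x, x⟫)
    (G : H →ₗ[ℝ] H₂) (Lap : H →ₗ[ℝ] H)
    (hLap : ∀ x y : H, ⟪-Lap x, y⟫ = ⟪G x, G y⟫)
    (D : H →ₗ[ℝ] H) (hDsymm : ∀ x y : H, ⟪D x, y⟫ = ⟪x, D y⟫)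
    (hD : ∀ ψ : H, ⟪D ψ, ψ⟫ = -⟪G ψ, M (G ψ)⟫)
    (γ₁ γ₂ : ℝ) (hγ₁ : 0 ≤ γ₁) (hγ₂ : 0 ≤ γ₂)
    (Q : H →ₗ[ℝ] H) (hQsymm : ∀ x y : H, ⟪Q x, y⟫ = ⟪x, Q y⟫)
    (φn φn1 qn qn1 μhat : H) (Δt : ℝ) (hΔt : 0 ≤ Δt)
    (hμ : μhat = (-(2 * γ₁)) • Lap (((1:ℝ)/2) • (φn1 + φn))
        + (2 * γ₂) • (((1:ℝ)/2) • (φn1 + φn))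
        + (2:ℝ) • Q (((1:ℝ)/2) • (qn1 + qn)))
    (hφ : φn1 - φn = Δt • D μhat)
    (hq : qn1 - qn = Q (φn1 - φn)) :
    (γ₁ * ‖G φn1‖ ^ 2 + γ₂ * ‖φn1‖ ^ 2 + ‖qn1‖ ^ 2)
      - (γ₁ * ‖G φn‖ ^ 2 + γ₂ * ‖φn‖ ^ 2 + ‖qn‖ ^ 2)
      = -Δt * ⟪G μhat, M (G μhat)⟫
    ∧ -Δt * ⟪G μhat, M (G μhat)⟫ ≤ 0 := by
  set d := φn1 - φn with hd
  -- term 1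
  have h1 : ⟪(-(2 * γ₁)) • Lap (((1:ℝ)/2) • (φn1 + φn)), d⟫
      = γ₁ * (‖G φn1‖ ^ 2 - ‖G φn‖ ^ 2) := by
    have : ⟪(-(2 * γ₁)) • Lap (((1:ℝ)/2) • (φn1 + φn)), d⟫
        = (2 * γ₁) * ⟪-Lap (((1:ℝ)/2) • (φn1 + φn)), d⟫ := by
      rw [real_inner_smul_left, inner_neg_left]; ring
    rw [this, hLap, map_smul, real_inner_smul_left, map_add, map_sub,
      inner_add_sub_self_real]
    ring
  -- term 2
  have h2 : ⟪(2 * γ₂) • (((1:ℝ)/2) • (φn1 + φn)), d⟫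
      = γ₂ * (‖φn1‖ ^ 2 - ‖φn‖ ^ 2) := by
    rw [real_inner_smul_left, real_inner_smul_left, hd, inner_add_sub_self_real]
    ring
  -- term 3
  have h3 : ⟪(2:ℝ) • Q (((1:ℝ)/2) • (qn1 + qn)), d⟫ = ‖qn1‖ ^ 2 - ‖qn‖ ^ 2 := by
    rw [real_inner_smul_left, map_smul, real_inner_smul_left, hQsymm, ← hq,
      inner_add_sub_self_real]
    ring
  have hsum : ⟪μhat, d⟫
      = (γ₁ * ‖G φn1‖ ^ 2 + γ₂ * ‖φn1‖ ^ 2 + ‖qn1‖ ^ 2)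
        - (γ₁ * ‖G φn‖ ^ 2 + γ₂ * ‖φn‖ ^ 2 + ‖qn‖ ^ 2) := by
    rw [hμ, inner_add_left, inner_add_left, h1, h2, h3]; ring
  have hkey : ⟪μhat, d⟫ = -Δt * ⟪G μhat, M (G μhat)⟫ := by
    rw [hφ, real_inner_smul_right, real_inner_comm, hD]; ring
  refine ⟨by rw [← hsum, hkey], ?_⟩
  have := hMnonneg (G μhat)
  rw [real_inner_comm] at this
  nlinarith
end
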